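/- Fix ρ > 0, let Φ_ρ(x) = f(x) + (ρ/2)[d_{K*}(Ax − b)]² and L_ρ = L_f + ρ‖A‖², and let {x_l} be generated by the iterative hard thresholding method applied to min_{x∈B} {Φ_ρ(x) + λ‖x‖₀} with constant L > L_ρ, i.e., x_{l+1} ∈ Argmin_{x∈B} {Φ_ρ(x_l) + ⟨∇Φ_ρ(x_l), x − x_l⟩ + (L/2)‖x − x_l‖² + λ‖x‖₀}. Let I_l = {i : (x_l)_i = 0} and define g(x; ρ, I) = L_ρ[x − Π_{B_I}(x − ∇Φ_ρ(x)/L_ρ)], where B_I = {x ∈ B : x_i = 0 for all i ∈ I}. Then g(x_l; ρ, I_l) → 0 as l → ∞. -/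

import Mathlib

open scoped RealInnerProductSpace Classical
open Filter

/-- The "l₀ norm": number of nonzero components (as a real number). -/
noncomputable def norm0 {n : ℕ} (x : EuclideanSpace ℝ (Fin n)) : ℝ :=
  ((Finset.univ.filter fun i => x i ≠ 0).card : ℝ)

section AuxProj
variable {E : Type*} [NormedAddCommGroup E] [InnerProductSpace ℝ E] [CompleteSpace E]

/-- Variational inequality from metric projection property. -/
lemma aux_vi {C : Set E} (hC : Convex ℝ C) {p w : E} (hp : p ∈ C)
    (hmin : ∀ y ∈ C, ‖p - w‖ ≤ ‖y - w‖) : ∀ y ∈ C, ⟪w - p, y - p⟫ ≤ 0 := by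
  have hne : Nonempty C := ⟨⟨p, hp⟩⟩
  have heq : ‖w - p‖ = ⨅ y : C, ‖w - y‖ := by
    apply le_antisymm
    · exact le_ciInf fun y => by
        rw [norm_sub_rev, norm_sub_rev w (y : E)]; exact hmin y y.2
    · have hbdd : BddBelow (Set.range fun y : C => ‖w - y‖) := by
        refine ⟨0, ?_⟩
        rintro _ ⟨y, rfl⟩
        exact norm_nonneg _
      exact ciInf_le hbdd ⟨p, hp⟩
  exact (norm_eq_iInf_iff_real_inner_le_zero hC hp).mp heq

lemma aux_unique {C : Set E} (hC : Convex ℝ C) {p q w : E} (hp : p ∈ C) (hq : q ∈ C)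
    (hminp : ∀ y ∈ C, ‖p - w‖ ≤ ‖y - w‖) (hminq : ∀ y ∈ C, ‖q - w‖ ≤ ‖y - w‖) : p = q := by
  have h1 := aux_vi hC hp hminp q hq
  have h2 := aux_vi hC hq hminq p hp
  have e0 : (w - p) - (w - q) = q - p := by abel
  have e1 : ⟪q - p, q - p⟫ = ⟪w - p, q - p⟫ - ⟪w - q, q - p⟫ := by
    rw [← inner_sub_left, e0]
  have e2 : ⟪w - q, p - q⟫ = -⟪w - q, q - p⟫ := by
    rw [← neg_sub q p, inner_neg_right]
  have e3 : ⟪q - p, q - p⟫ = ‖q - p‖ ^ 2 := real_inner_self_eq_norm_sq _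
  have hsq : ‖q - p‖ ^ 2 ≤ 0 := by linarith
  have hle : ‖q - p‖ ≤ 0 := by nlinarith [norm_nonneg (q - p)]
  have hn : ‖q - p‖ = 0 := le_antisymm hle (norm_nonneg _)
  exact (sub_eq_zero.mp (norm_eq_zero.mp hn)).symm

lemma aux_nonexp {C : Set E} (hC : Convex ℝ C) {p1 p2 w1 w2 : E} (hp1 : p1 ∈ C) (hp2 : p2 ∈ C)
    (h1 : ∀ y ∈ C, ‖p1 - w1‖ ≤ ‖y - w1‖) (h2 : ∀ y ∈ C, ‖p2 - w2‖ ≤ ‖y - w2‖) :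
    ‖p1 - p2‖ ≤ ‖w1 - w2‖ := by
  have v1 := aux_vi hC hp1 h1 p2 hp2
  have v2 := aux_vi hC hp2 h2 p1 hp1
  have e0 : (w1 - p1) - (w2 - p2) = (w1 - w2) - (p1 - p2) := by abel
  have e1 : ⟪(w1 - w2) - (p1 - p2), p2 - p1⟫ = ⟪w1 - p1, p2 - p1⟫ - ⟪w2 - p2, p2 - p1⟫ := by
    rw [← inner_sub_left, e0]
  have e2 : ⟪w2 - p2, p1 - p2⟫ = -⟪w2 - p2, p2 - p1⟫ := by
    rw [← neg_sub p2 p1, inner_neg_right]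
  have e3 : ⟪(w1 - w2) - (p1 - p2), p2 - p1⟫
      = ⟪w1 - w2, p2 - p1⟫ - ⟪p1 - p2, p2 - p1⟫ := inner_sub_left _ _ _
  have e4 : ⟪p1 - p2, p2 - p1⟫ = -(‖p1 - p2‖ ^ 2) := by
    rw [← neg_sub p1 p2, inner_neg_right, real_inner_self_eq_norm_sq]
  have e5 : ⟪w1 - w2, p2 - p1⟫ = -⟪w1 - w2, p1 - p2⟫ := by
    rw [← neg_sub p1 p2, inner_neg_right]
  have key : ‖p1 - p2‖ ^ 2 ≤ ⟪w1 - w2, p1 - p2⟫ := by linarith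
  have hcs : ⟪w1 - w2, p1 - p2⟫ ≤ ‖w1 - w2‖ * ‖p1 - p2‖ := real_inner_le_norm _ _
  nlinarith [norm_nonneg (p1 - p2), norm_nonneg (w1 - w2)]

lemma aux_step {C : Set E} (hC : Convex ℝ C) {x g p1 p2 : E} {t1 t2 : ℝ}
    (ht1 : 0 < t1) (ht12 : t1 ≤ t2) (hp1 : p1 ∈ C) (hp2 : p2 ∈ C)
    (h1 : ∀ y ∈ C, ‖p1 - (x - t1 • g)‖ ≤ ‖y - (x - t1 • g)‖)
    (h2 : ∀ y ∈ C, ‖p2 - (x - t2 • g)‖ ≤ ‖y - (x - t2 • g)‖) :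
    t1 * ‖x - p2‖ ≤ t2 * ‖x - p1‖ := by
  have v1 := aux_vi hC hp1 h1 p2 hp2
  have v2 := aux_vi hC hp2 h2 p1 hp1
  set u := x - p1 with hu
  set v := x - p2 with hv
  have e1 : (x - t1 • g) - p1 = u - t1 • g := by rw [hu]; abel
  have e2 : (x - t2 • g) - p2 = v - t2 • g := by rw [hv]; abel
  have e3 : p2 - p1 = u - v := by rw [hu, hv]; abel
  have e4 : p1 - p2 = v - u := by rw [hu, hv]; abel
  rw [e1, e3] at v1
  rw [e2, e4] at v2
  have hv1 : ⟪u, u⟫ - ⟪u, v⟫ - t1 * (⟪g, u⟫ - ⟪g, v⟫) ≤ 0 := by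
    have : ⟪u - t1 • g, u - v⟫ = ⟪u, u⟫ - ⟪u, v⟫ - t1 * (⟪g, u⟫ - ⟪g, v⟫) := by
      simp [inner_sub_left, inner_sub_right, real_inner_smul_left]; ring
    linarith [this ▸ v1]
  have hv2 : ⟪v, v⟫ - ⟪u, v⟫ - t2 * (⟪g, v⟫ - ⟪g, u⟫) ≤ 0 := by
    have : ⟪v - t2 • g, v - u⟫ = ⟪v, v⟫ - ⟪u, v⟫ - t2 * (⟪g, v⟫ - ⟪g, u⟫) := by
      simp [inner_sub_left, inner_sub_right, real_inner_smul_left, real_inner_comm v u]; ring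
    linarith [this ▸ v2]
  have ht2 : 0 < t2 := lt_of_lt_of_le ht1 ht12
  have key : t2 * ‖u‖ ^ 2 + t1 * ‖v‖ ^ 2 ≤ (t1 + t2) * (‖u‖ * ‖v‖) := by
    have hiu : ⟪u, u⟫ = ‖u‖ ^ 2 := real_inner_self_eq_norm_sq u
    have hiv : ⟪v, v⟫ = ‖v‖ ^ 2 := real_inner_self_eq_norm_sq v
    have hcs : ⟪u, v⟫ ≤ ‖u‖ * ‖v‖ := real_inner_le_norm u v
    nlinarith [mul_le_mul_of_nonneg_left hv1 (le_of_lt ht2),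
      mul_le_mul_of_nonneg_left hv2 (le_of_lt ht1)]
  nlinarith [key, ht1, ht2, norm_nonneg u, norm_nonneg v,
    mul_nonneg (sub_nonneg.2 ht12) (norm_nonneg u)]

lemma aux_quad (g xk v : E) {Lq : ℝ} (hLq : 0 < Lq) :
    ⟪g, v - xk⟫ + Lq / 2 * ‖v - xk‖ ^ 2
      = Lq / 2 * ‖v - (xk - (1 / Lq) • g)‖ ^ 2 - 1 / (2 * Lq) * ‖g‖ ^ 2 := by
  have e : v - (xk - (1 / Lq) • g) = (v - xk) + (1 / Lq) • g := by abel
  have hLne : Lq ≠ 0 := ne_of_gt hLq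
  rw [e, norm_add_sq_real, real_inner_smul_right, norm_smul, Real.norm_eq_abs,
    abs_of_pos (by positivity), mul_pow, real_inner_comm]
  field_simp
  ring

lemma aux_descent {s : Set E} (hs : Convex ℝ s) {f : E → ℝ} {f' : E → E}
    (hdiff : ∀ z ∈ s, HasGradientAt f (f' z) z) {Lc : ℝ} (hLc : 0 ≤ Lc)
    (hlip : ∀ z ∈ s, ∀ w ∈ s, ‖f' z - f' w‖ ≤ Lc * ‖z - w‖)
    {x y : E} (hx : x ∈ s) (hy : y ∈ s) :
    f y ≤ f x + ⟪f' x, y - x⟫ + Lc / 2 * ‖y - x‖ ^ 2 := by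
  set d := y - x with hd
  have hseg : ∀ t : ℝ, t ∈ Set.Icc (0 : ℝ) 1 → x + t • d ∈ s := by
    intro t ht
    have h := hs hx hy (by linarith [ht.2] : (0:ℝ) ≤ 1 - t) ht.1 (by ring)
    have e : (1 - t) • x + t • y = x + t • d := by rw [hd]; module
    rwa [e] at h
  set c1 : ℝ := ⟪f' x, d⟫ with hc1
  set c2 : ℝ := Lc / 2 * ‖d‖ ^ 2 with hc2
  set h : ℝ → ℝ := fun t => f (x + t • d) - t * c1 - c2 * t ^ 2 with hh
  have hderiv : ∀ t ∈ Set.Icc (0 : ℝ) 1,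
      HasDerivAt h (⟪f' (x + t • d), d⟫ - c1 - 2 * c2 * t) t := by
    intro t ht
    have hline : HasDerivAt (fun t : ℝ => x + t • d) d t := by
      simpa using ((hasDerivAt_id t).smul_const d).const_add x
    have hgrad := (hdiff _ (hseg t ht)).hasFDerivAt
    have hcomp : HasDerivAt (fun t : ℝ => f (x + t • d)) ⟪f' (x + t • d), d⟫ t := by
      have := hgrad.comp_hasDerivAt t hline
      simp only [InnerProductSpace.toDual_apply_apply] at this
      exact this
    have hpoly : HasDerivAt (fun t : ℝ => t * c1 + c2 * t ^ 2) (c1 + 2 * c2 * t) t := by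
      have h1 : HasDerivAt (fun t : ℝ => t * c1) c1 t := by
        simpa using (hasDerivAt_id t).mul_const c1
      have h2 : HasDerivAt (fun t : ℝ => c2 * t ^ 2) (c2 * (2 * t)) t := by
        simpa using ((hasDerivAt_pow 2 t)).const_mul c2
      have := h1.add h2
      convert this using 1
      · rfl
      · rfl
      · rfl
      ring
    have := hcomp.sub hpoly
    convert this using 1
    · rfl
    · rfl
    · funext s; simp [hh]; ring
    · ring
  have hcont : ContinuousOn h (Set.Icc 0 1) :=
    fun t ht => (hderiv t ht).continuousAt.continuousWithinAt
  have hanti : AntitoneOn h (Set.Icc 0 1) := by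
    apply antitoneOn_of_deriv_nonpos (convex_Icc 0 1) hcont
    · intro t ht
      rw [interior_Icc] at ht
      exact (hderiv t ⟨le_of_lt ht.1, le_of_lt ht.2⟩).differentiableAt.differentiableWithinAt
    · intro t ht
      rw [interior_Icc] at ht
      have ht' : t ∈ Set.Icc (0:ℝ) 1 := ⟨le_of_lt ht.1, le_of_lt ht.2⟩
      rw [(hderiv t ht').deriv]
      have hb : ⟪f' (x + t • d) - f' x, d⟫ ≤ Lc * t * ‖d‖ ^ 2 := by
        calc ⟪f' (x + t • d) - f' x, d⟫ ≤ ‖f' (x + t • d) - f' x‖ * ‖d‖ :=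
              real_inner_le_norm _ _
          _ ≤ (Lc * ‖(x + t • d) - x‖) * ‖d‖ := by
              apply mul_le_mul_of_nonneg_right _ (norm_nonneg d)
              exact hlip _ (hseg t ht') _ hx
          _ = Lc * t * ‖d‖ ^ 2 := by
              rw [show (x + t • d) - x = t • d by abel, norm_smul, Real.norm_eq_abs,
                abs_of_nonneg (le_of_lt ht.1)]
              ring
      have e : ⟪f' (x + t • d), d⟫ - c1 = ⟪f' (x + t • d) - f' x, d⟫ := by
        rw [hc1, inner_sub_left]
      have e2 : (2:ℝ) * c2 * t = Lc * t * ‖d‖ ^ 2 := by rw [hc2]; ring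
      linarith
  have h10 : h 1 ≤ h 0 :=
    hanti (Set.left_mem_Icc.2 zero_le_one) (Set.right_mem_Icc.2 zero_le_one) zero_le_one
  have h0 : h 0 = f x := by simp [hh]
  have h1 : h 1 = f y - c1 - c2 := by
    have e : x + (1:ℝ) • d = y := by rw [hd]; module
    simp only [hh]
    rw [e]; ring
  rw [h0, h1] at h10
  rw [hc1, hc2] at h10
  linarith

end AuxProj

lemma aux_ereal_lb {r : EReal} {c d a b : ℝ} (hc : r ≤ (c : EReal)) (hd : r ≤ (d : EReal))
    (ha : 0 ≤ a) (hb : 0 ≤ b) (hab : a + b = 1) : r ≤ ((a * c + b * d : ℝ) : EReal) := by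
  induction r using EReal.rec with
  | bot => exact bot_le
  | coe s =>
    rw [EReal.coe_le_coe_iff] at hc hd ⊢
    have e : a * s + b * s = s := by rw [← add_mul, hab, one_mul]
    nlinarith [mul_nonneg ha (sub_nonneg.2 hc), mul_nonneg hb (sub_nonneg.2 hd), e]
  | top => exact absurd hc (EReal.coe_lt_top c).not_ge

lemma aux_ereal_ub {r : EReal} {c d a b : ℝ} (hc : (c : EReal) ≤ r) (hd : (d : EReal) ≤ r)
    (ha : 0 ≤ a) (hb : 0 ≤ b) (hab : a + b = 1) : ((a * c + b * d : ℝ) : EReal) ≤ r := by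
  induction r using EReal.rec with
  | bot => exact absurd hc (EReal.bot_lt_coe c).not_ge
  | coe s =>
    rw [EReal.coe_le_coe_iff] at hc hd ⊢
    have e : a * s + b * s = s := by rw [← add_mul, hab, one_mul]
    nlinarith [mul_nonneg ha (sub_nonneg.2 hc), mul_nonneg hb (sub_nonneg.2 hd), e]
  | top => exact le_top

set_option maxHeartbeats 2000000 in
/-- For the IHT method applied to the quadratic penalty problem
`min_{x∈B} Φ_ρ(x) + λ‖x‖₀`, with `I_l = {i : (x_l)_i = 0}` and
`g(x; ρ, I) = L_ρ (x − Π_{B_I}(x − ∇Φ_ρ(x)/L_ρ))`, one has `g(x_l; ρ, I_l) → 0`. -/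
theorem stmt_18 {n m : ℕ} (l u : Fin n → EReal)
    (hl : ∀ i, l i ≤ 0) (hu : ∀ i, 0 ≤ u i)
    (B : Set (EuclideanSpace ℝ (Fin n)))
    (hB : B = {x | ∀ i, l i ≤ (x i : EReal) ∧ (x i : EReal) ≤ u i})
    (f : EuclideanSpace ℝ (Fin n) → ℝ)
    (f' : EuclideanSpace ℝ (Fin n) → EuclideanSpace ℝ (Fin n))
    (hfconv : ConvexOn ℝ B f)
    (hfdiff : ∀ x ∈ B, HasGradientAt f (f' x) x)
    (Lf : ℝ) (hLf : 0 < Lf)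
    (hflip : ∀ x ∈ B, ∀ y ∈ B, ‖f' x - f' y‖ ≤ Lf * ‖x - y‖)
    (hfbdd : ∃ c : ℝ, ∀ x ∈ B, c ≤ f x)
    (lam : ℝ) (hlam : 0 < lam)
    (A : EuclideanSpace ℝ (Fin n) →L[ℝ] EuclideanSpace ℝ (Fin m))
    (b : EuclideanSpace ℝ (Fin m))
    (K : Set (EuclideanSpace ℝ (Fin m)))
    (hKclosed : IsClosed K) (hKconv : Convex ℝ K)
    (hKcone : ∀ c : ℝ, 0 ≤ c → ∀ z ∈ K, c • z ∈ K)
    (Kstar : Set (EuclideanSpace ℝ (Fin m)))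
    (hKstar : Kstar = {s | ∀ z ∈ K, 0 ≤ ⟪s, z⟫})
    (projK : EuclideanSpace ℝ (Fin m) → EuclideanSpace ℝ (Fin m))
    (hprojK : ∀ z, projK z ∈ Kstar ∧ ∀ y ∈ Kstar, ‖projK z - z‖ ≤ ‖y - z‖)
    (ρ : ℝ) (hρ : 0 < ρ)
    (Φ : EuclideanSpace ℝ (Fin n) → ℝ)
    (hΦ : ∀ x, Φ x = f x + ρ / 2 * Metric.infDist (A x - b) Kstar ^ 2)
    (Φ' : EuclideanSpace ℝ (Fin n) → EuclideanSpace ℝ (Fin n))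
    (hΦ' : ∀ x, Φ' x = f' x + ρ • (ContinuousLinearMap.adjoint A) (A x - b - projK (A x - b)))
    (hΦconv : ConvexOn ℝ B Φ)
    (hΦdiff : ∀ x ∈ B, HasGradientAt Φ (Φ' x) x)
    (Lρ : ℝ) (hLρ : Lρ = Lf + ρ * ‖A‖ ^ 2)
    (hΦlip : ∀ x ∈ B, ∀ y ∈ B, ‖Φ' x - Φ' y‖ ≤ Lρ * ‖x - y‖)
    (BI : Set (Fin n) → Set (EuclideanSpace ℝ (Fin n)))
    (hBI : ∀ I : Set (Fin n), BI I = {x ∈ B | ∀ i ∈ I, x i = 0})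
    (projBI : Set (Fin n) → EuclideanSpace ℝ (Fin n) → EuclideanSpace ℝ (Fin n))
    (hprojBI : ∀ (I : Set (Fin n)) (z : EuclideanSpace ℝ (Fin n)),
      projBI I z ∈ BI I ∧ ∀ y ∈ BI I, ‖projBI I z - z‖ ≤ ‖y - z‖)
    (L : ℝ) (hL : Lρ < L)
    (x : ℕ → EuclideanSpace ℝ (Fin n)) (hx0 : x 0 ∈ B)
    (hiter : ∀ k : ℕ, x (k + 1) ∈ B ∧ ∀ y ∈ B,
      Φ (x k) + ⟪Φ' (x k), x (k + 1) - x k⟫ + L / 2 * ‖x (k + 1) - x k‖ ^ 2 +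
          lam * norm0 (x (k + 1)) ≤
        Φ (x k) + ⟪Φ' (x k), y - x k⟫ + L / 2 * ‖y - x k‖ ^ 2 + lam * norm0 y) :
    Tendsto
      (fun k => Lρ • (x k - projBI {i : Fin n | x k i = 0} (x k - (1 / Lρ) • Φ' (x k))))
      atTop (nhds 0) := by
  have hLρpos : 0 < Lρ := by
    have h := sq_nonneg ‖A‖
    rw [hLρ]; nlinarith
  have hLpos : 0 < L := lt_trans hLρpos hL
  have hLne : L ≠ 0 := ne_of_gt hLpos
  have hLρne : Lρ ≠ 0 := ne_of_gt hLρpos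
  have hxB : ∀ k, x k ∈ B := by
    intro k
    induction k with
    | zero => exact hx0
    | succ k _ => exact (hiter k).1
  have happ : ∀ (a b : ℝ) (p q : EuclideanSpace ℝ (Fin n)) (i : Fin n),
      (a • p + b • q) i = a * p i + b * q i := by
    intro a b p q i
    simp [PiLp.add_apply, PiLp.smul_apply, smul_eq_mul]
  have hBconv : Convex ℝ B := by
    rw [hB]
    intro p hp q hq a b ha hb hab
    intro i
    refine ⟨?_, ?_⟩
    · rw [happ]; exact aux_ereal_lb (hp i).1 (hq i).1 ha hb hab
    · rw [happ]; exact aux_ereal_ub (hp i).2 (hq i).2 ha hb hab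
  have hBIconv : ∀ I, Convex ℝ (BI I) := by
    intro I
    rw [hBI]
    intro p hp q hq a b ha hb hab
    refine ⟨hBconv hp.1 hq.1 ha hb hab, ?_⟩
    intro i hi
    rw [happ, hp.2 i hi, hq.2 i hi]
    ring
  obtain ⟨c, hc⟩ := hfbdd
  have hΦlb : ∀ z ∈ B, c ≤ Φ z := by
    intro z hz
    rw [hΦ]
    have h1 : 0 ≤ Metric.infDist (A z - b) Kstar ^ 2 := sq_nonneg _
    nlinarith [hc z hz]
  have hnorm0nn : ∀ z : EuclideanSpace ℝ (Fin n), (0:ℝ) ≤ norm0 z := fun z => Nat.cast_nonneg _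
  set F : ℕ → ℝ := fun k => Φ (x k) + lam * norm0 (x k) with hF
  clear_value F
  have hstep : ∀ k, F (k + 1) + (L - Lρ) / 2 * ‖x (k + 1) - x k‖ ^ 2 ≤ F k := by
    intro k
    have hdesc := aux_descent hBconv hΦdiff (le_of_lt hLρpos) hΦlip (hxB k) (hxB (k + 1))
    have hit := (hiter k).2 (x k) (hxB k)
    simp only [sub_self, inner_zero_right, norm_zero] at hit
    simp only [hF]
    nlinarith [hit, hdesc]
  have hFanti : Antitone F := by
    apply antitone_nat_of_succ_le
    intro k
    have hnn : (0:ℝ) ≤ (L - Lρ) / 2 * ‖x (k + 1) - x k‖ ^ 2 :=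
      mul_nonneg (by linarith) (sq_nonneg _)
    linarith [hstep k, hnn]
  have hFbdd : BddBelow (Set.range F) := by
    refine ⟨c, ?_⟩
    rintro _ ⟨k, rfl⟩
    simp only [hF]
    nlinarith [hΦlb (x k) (hxB k), hnorm0nn (x k), hlam]
  have hFtend : Tendsto F atTop (nhds (⨅ k, F k)) := tendsto_atTop_ciInf hFanti hFbdd
  have hdiff0 : Tendsto (fun k => F k - F (k + 1)) atTop (nhds 0) := by
    have h2 : Tendsto (fun k => F (k + 1)) atTop (nhds (⨅ k, F k)) :=
      (tendsto_add_atTop_iff_nat 1).2 hFtend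
    simpa using hFtend.sub h2
  have hsq : Tendsto (fun k => ‖x (k + 1) - x k‖ ^ 2) atTop (nhds 0) := by
    have hbound : ∀ k, ‖x (k + 1) - x k‖ ^ 2 ≤ 2 / (L - Lρ) * (F k - F (k + 1)) := by
      intro k
      have hpos : (0:ℝ) < L - Lρ := sub_pos.2 hL
      have hD : (L - Lρ) / 2 * ‖x (k + 1) - x k‖ ^ 2 ≤ F k - F (k + 1) := by
        linarith [hstep k]
      have h2 := mul_le_mul_of_nonneg_left hD (by positivity : (0:ℝ) ≤ 2 / (L - Lρ))
      have hne' : L - Lρ ≠ 0 := ne_of_gt hpos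
      have e : 2 / (L - Lρ) * ((L - Lρ) / 2 * ‖x (k + 1) - x k‖ ^ 2)
          = ‖x (k + 1) - x k‖ ^ 2 := by
        field_simp
      rw [e] at h2
      exact h2
    have hlim : Tendsto (fun k => 2 / (L - Lρ) * (F k - F (k + 1))) atTop (nhds 0) := by
      simpa using hdiff0.const_mul (2 / (L - Lρ))
    exact squeeze_zero (fun k => sq_nonneg _) hbound hlim
  have hΔ : Tendsto (fun k => ‖x (k + 1) - x k‖) atTop (nhds 0) := by
    have h := hsq.sqrt
    rw [Real.sqrt_zero] at h
    exact h.congr fun k => Real.sqrt_sq (norm_nonneg _)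
  -- key per-step bound
  have hkey : ∀ k, ‖Lρ • (x (k + 1) -
      projBI {i : Fin n | x (k + 1) i = 0} (x (k + 1) - (1 / Lρ) • Φ' (x (k + 1))))‖
      ≤ (L + Lρ) * ‖x (k + 1) - x k‖ := by
    intro k
    set Ik : Set (Fin n) := {i : Fin n | x (k + 1) i = 0} with hIk
    have hCconv : Convex ℝ (BI Ik) := hBIconv Ik
    have hzC : x (k + 1) ∈ BI Ik := by
      rw [hBI]
      exact ⟨hxB (k + 1), fun i hi => hi⟩
    have hCsubB : BI Ik ⊆ B := by
      rw [hBI]; exact fun y hy => hy.1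
    have hnorm0le : ∀ y ∈ BI Ik, norm0 y ≤ norm0 (x (k + 1)) := by
      intro y hy
      rw [hBI] at hy
      have hsub : (Finset.univ.filter fun i => y i ≠ 0)
          ⊆ (Finset.univ.filter fun i => x (k + 1) i ≠ 0) := by
        intro i hi
        simp only [Finset.mem_filter, Finset.mem_univ, true_and] at hi ⊢
        intro h0
        exact hi (hy.2 i h0)
      unfold norm0
      exact_mod_cast Finset.card_le_card hsub
    set w : EuclideanSpace ℝ (Fin n) := x k - (1 / L) • Φ' (x k) with hw
    have hminz : ∀ y ∈ BI Ik, ‖x (k + 1) - w‖ ≤ ‖y - w‖ := by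
      intro y hy
      have hit := (hiter k).2 y (hCsubB hy)
      have hq1 : ⟪Φ' (x k), x (k + 1) - x k⟫ + L / 2 * ‖x (k + 1) - x k‖ ^ 2
          = L / 2 * ‖x (k + 1) - w‖ ^ 2 - 1 / (2 * L) * ‖Φ' (x k)‖ ^ 2 := by
        rw [hw]; exact aux_quad _ _ _ hLpos
      have hq2 : ⟪Φ' (x k), y - x k⟫ + L / 2 * ‖y - x k‖ ^ 2
          = L / 2 * ‖y - w‖ ^ 2 - 1 / (2 * L) * ‖Φ' (x k)‖ ^ 2 := by
        rw [hw]; exact aux_quad _ _ _ hLpos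
      have hn0 := mul_le_mul_of_nonneg_left (hnorm0le y hy) (le_of_lt hlam)
      have key : L / 2 * ‖x (k + 1) - w‖ ^ 2 ≤ L / 2 * ‖y - w‖ ^ 2 := by
        linarith
      have key2 : ‖x (k + 1) - w‖ ^ 2 ≤ ‖y - w‖ ^ 2 := by
        have h2 := mul_le_mul_of_nonneg_left key (by positivity : (0:ℝ) ≤ 2 / L)
        have e1 : 2 / L * (L / 2 * ‖x (k + 1) - w‖ ^ 2) = ‖x (k + 1) - w‖ ^ 2 := by
          field_simp
        have e2 : 2 / L * (L / 2 * ‖y - w‖ ^ 2) = ‖y - w‖ ^ 2 := by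
          field_simp
        rw [e1, e2] at h2
        exact h2
      nlinarith [key2, norm_nonneg (x (k + 1) - w), norm_nonneg (y - w)]
    have hzproj : x (k + 1) = projBI Ik w :=
      aux_unique hCconv hzC (hprojBI Ik w).1 hminz (hprojBI Ik w).2
    set p1 := projBI Ik (x (k + 1) - (1 / L) • Φ' (x (k + 1))) with hp1def
    set p2 := projBI Ik (x (k + 1) - (1 / Lρ) • Φ' (x (k + 1))) with hp2def
    have hp1 := hprojBI Ik (x (k + 1) - (1 / L) • Φ' (x (k + 1)))
    have hp2 := hprojBI Ik (x (k + 1) - (1 / Lρ) • Φ' (x (k + 1)))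
    have hstep12 : (1 / L) * ‖x (k + 1) - p2‖ ≤ (1 / Lρ) * ‖x (k + 1) - p1‖ :=
      aux_step hCconv (by positivity) (one_div_le_one_div_of_le hLρpos (le_of_lt hL))
        hp1.1 hp2.1 hp1.2 hp2.2
    have hzp1 : ‖x (k + 1) - p1‖ ≤ (1 + Lρ / L) * ‖x (k + 1) - x k‖ := by
      have hne := aux_nonexp hCconv (hprojBI Ik w).1 hp1.1 (hprojBI Ik w).2 hp1.2
      rw [← hzproj] at hne
      have hvec : w - (x (k + 1) - (1 / L) • Φ' (x (k + 1)))
          = (x k - x (k + 1)) - (1 / L) • (Φ' (x k) - Φ' (x (k + 1))) := by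
        rw [hw, smul_sub]; abel
      rw [hvec] at hne
      have hsmul : ‖(1 / L : ℝ) • (Φ' (x k) - Φ' (x (k + 1)))‖
          = (1 / L) * ‖Φ' (x k) - Φ' (x (k + 1))‖ := by
        rw [norm_smul, Real.norm_eq_abs, abs_of_pos (by positivity)]
      have hnb : ‖(x k - x (k + 1)) - (1 / L) • (Φ' (x k) - Φ' (x (k + 1)))‖
          ≤ ‖x k - x (k + 1)‖ + (1 / L) * ‖Φ' (x k) - Φ' (x (k + 1))‖ := by
        calc ‖(x k - x (k + 1)) - (1 / L) • (Φ' (x k) - Φ' (x (k + 1)))‖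
            ≤ ‖x k - x (k + 1)‖ + ‖(1 / L : ℝ) • (Φ' (x k) - Φ' (x (k + 1)))‖ :=
              norm_sub_le _ _
          _ = ‖x k - x (k + 1)‖ + (1 / L) * ‖Φ' (x k) - Φ' (x (k + 1))‖ := by rw [hsmul]
      have hlipk := hΦlip (x k) (hxB k) (x (k + 1)) (hxB (k + 1))
      have hmul := mul_le_mul_of_nonneg_left hlipk (by positivity : (0:ℝ) ≤ 1 / L)
      have hrev : ‖x k - x (k + 1)‖ = ‖x (k + 1) - x k‖ := norm_sub_rev _ _
      have e : (1 + Lρ / L) * ‖x (k + 1) - x k‖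
          = ‖x (k + 1) - x k‖ + 1 / L * (Lρ * ‖x (k + 1) - x k‖) := by
        field_simp
      rw [hrev] at hnb hmul
      linarith
    have hfin : Lρ * ‖x (k + 1) - p2‖ ≤ (L + Lρ) * ‖x (k + 1) - x k‖ := by
      have h0 : (0:ℝ) ≤ L * Lρ := le_of_lt (mul_pos hLpos hLρpos)
      have h := mul_le_mul_of_nonneg_left hstep12 h0
      have e1 : L * Lρ * (1 / L * ‖x (k + 1) - p2‖) = Lρ * ‖x (k + 1) - p2‖ := by
        field_simp
      have e2 : L * Lρ * (1 / Lρ * ‖x (k + 1) - p1‖) = L * ‖x (k + 1) - p1‖ := by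
        field_simp
      rw [e1, e2] at h
      have h2 := mul_le_mul_of_nonneg_left hzp1 (le_of_lt hLpos)
      have e3 : L * ((1 + Lρ / L) * ‖x (k + 1) - x k‖) = (L + Lρ) * ‖x (k + 1) - x k‖ := by
        field_simp
      rw [e3] at h2
      linarith
    rw [norm_smul, Real.norm_eq_abs, abs_of_pos hLρpos]
    exact hfin
  have hshift : Tendsto (fun k => Lρ • (x (k + 1) -
      projBI {i : Fin n | x (k + 1) i = 0} (x (k + 1) - (1 / Lρ) • Φ' (x (k + 1)))))
      atTop (nhds 0) := by
    rw [tendsto_zero_iff_norm_tendsto_zero]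
    refine squeeze_zero (fun k => norm_nonneg _) hkey ?_
    simpa using hΔ.const_mul (L + Lρ)
  exact (tendsto_add_atTop_iff_nat 1).1 hshift
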